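/- arXiv:1701.06288 — 3 statements merged into one kernel-verified Lean document; each statement's English description precedes it below -/
import Mathlib

section
/- Let α > 0 and 0 < V₀ ≤ α². There exist constants c₀ > 0 and d₀ > 0 such that for all d > d₀, the unique solution t_d of √t tanh(√t d) + √(V₀+t) tanh(√(V₀+t) d) = α satisfies t_d ≤ t_∞ + c₀/d, where t_∞ = ((α² − V₀)/(2α))². Equivalently, the Neumann ground-state eigenvalue satisfies μ_d ≥ μ − c₀ d^{−1} with μ = −t_∞. -/
lemma tanh_lower (y : ℝ) (hy : 0 < y) : 1 - 1/y ≤ Real.tanh y := by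
  rw [Real.tanh_eq_sinh_div_cosh, le_div_iff₀ (Real.cosh_pos y), Real.sinh_eq, Real.cosh_eq]
  have h1 : Real.exp y * Real.exp (-y) = 1 := by
    rw [← Real.exp_add]; simp
  have h2 : 2*y + 1 ≤ Real.exp (2*y) := Real.add_one_le_exp (2*y)
  have h3 : Real.exp (2*y) = Real.exp y * Real.exp y := by
    rw [← Real.exp_add]; ring_nf
  have h4 : 0 < Real.exp (-y) := Real.exp_pos _
  have h5 : 0 < Real.exp y := Real.exp_pos _
  have hy' : y ≠ 0 := ne_of_gt hy
  have key : 2*Real.exp (-y)*y ≤ Real.exp y + Real.exp (-y) := by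
    nlinarith [mul_pos h4 hy]
  have h6 : 2*Real.exp (-y) ≤ (Real.exp y + Real.exp (-y))/y :=
    (le_div_iff₀ hy).mpr key
  have h7 : (Real.exp y + Real.exp (-y))/y = (1/y)*(Real.exp y + Real.exp (-y)) := by
    ring
  rw [h7] at h6
  nlinarith [h6]

/-- Quantitative Neumann eigenvalue estimate: for `α > 0`, `0 < V₀ ≤ α²` there
are `c₀ > 0`, `d₀ > 0` such that for all `d > d₀` every positive solution of
`√t tanh(√t d) + √(V₀+t) tanh(√(V₀+t) d) = α` satisfies
`t ≤ ((α²-V₀)/(2α))² + c₀/d`. -/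
theorem stmt_7 (α V₀ : ℝ) (hα : 0 < α) (hV₀ : 0 < V₀) (hle : V₀ ≤ α ^ 2) :
    ∃ c₀ > (0:ℝ), ∃ d₀ > (0:ℝ), ∀ d > d₀, ∀ t > (0:ℝ),
      Real.sqrt t * Real.tanh (Real.sqrt t * d)
        + Real.sqrt (V₀ + t) * Real.tanh (Real.sqrt (V₀ + t) * d) = α →
      t ≤ ((α ^ 2 - V₀) / (2 * α)) ^ 2 + c₀ / d := by
  refine ⟨4*(α+2), by positivity, 1, one_pos, ?_⟩
  intro d hd t ht heq
  have hd0 : (0:ℝ) < d := by linarith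
  set s := Real.sqrt t with hs_def
  set u := Real.sqrt (V₀ + t) with hu_def
  have hVt : 0 < V₀ + t := by linarith
  have hs : 0 < s := Real.sqrt_pos.mpr ht
  have hu : 0 < u := Real.sqrt_pos.mpr hVt
  have h1 : s - 1/d ≤ s * Real.tanh (s * d) := by
    have h := tanh_lower (s*d) (mul_pos hs hd0)
    have := mul_le_mul_of_nonneg_left h hs.le
    have hkey : s * (1 - 1/(s*d)) = s - 1/d := by
      field_simp
    linarith [hkey ▸ this]
  have h2 : u - 1/d ≤ u * Real.tanh (u * d) := by
    have h := tanh_lower (u*d) (mul_pos hu hd0)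
    have := mul_le_mul_of_nonneg_left h hu.le
    have hkey : u * (1 - 1/(u*d)) = u - 1/d := by
      field_simp
    linarith [hkey ▸ this]
  have hsum : s + u ≤ α + 2/d := by
    have h2d : (2:ℝ)/d = 1/d + 1/d := by ring
    rw [h2d]; linarith
  set a := (α^2 - V₀)/(2*α) with ha_def
  have ha : 0 ≤ a := div_nonneg (by linarith) (by linarith)
  show t ≤ a^2 + 4*(α+2)/d
  rcases le_or_gt t (a^2) with hcase | hcase
  · have : 0 < 4*(α+2)/d := by positivity
    linarith
  · have hsa : a ≤ s := by
      have h := Real.sqrt_le_sqrt hcase.le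
      rwa [Real.sqrt_sq ha] at h
    set b := (α^2 + V₀)/(2*α) with hb_def
    have hb : 0 < b := by positivity
    have hab : a + b = α := by rw [ha_def, hb_def]; field_simp; ring
    have hb2 : b^2 = V₀ + a^2 := by rw [ha_def, hb_def]; field_simp; ring
    have hu2 : u^2 = V₀ + t := Real.sq_sqrt hVt.le
    have hble : b ≤ α := by
      rw [hb_def, div_le_iff₀ (by linarith)]; nlinarith
    have h2d : (2:ℝ)/d ≤ 2 := by
      rw [div_le_iff₀ hd0]; nlinarith
    have hule : u ≤ α + 2 := by nlinarith
    have humb : u - b ≤ 2/d := by linarith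
    have humb' : (u - b) * d ≤ 2 := by
      rw [← le_div_iff₀ hd0]; exact humb
    rw [← sub_le_iff_le_add', le_div_iff₀ hd0]
    nlinarith [mul_nonneg (add_pos hu hb).le hd0.le, hd0.le]
end

section
/- Let α > 0, V₀ > 0 and d > 0. If √V₀ · tanh(√V₀ · d) ≥ α, then for every real-valued φ ∈ H¹(−d,d), ∫_{−d}^{d} |φ'(x)|² dx + V₀ ∫_0^d |φ(x)|² dx − α|φ(0)|² ≥ 0. In particular, if V₀ > α² then this holds for all sufficiently large d. -/
open MeasureTheory intervalIntegral

/-!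
Write `β = √V₀`. The logarithmic derivative `W x = β tanh (β (x - d))` of the minimiser
`cosh (β (x - d))` solves the Riccati equation `W' + W² = β²` with `W d = 0`, so completing the
square, `φ'² + β² φ² = (φ' - W φ)² + (W φ²)'`, gives
`∫₀ᵈ (φ'² + β² φ²) ≥ -W 0 φ(0)² = β tanh (β d) φ(0)²`; the kinetic energy on `(-d, 0)` is dropped.
Since `tanh` increases to `1`, the condition `α ≤ β tanh (β d)` holds exactly from
`d₀ = artanh (α / β) / β` on.
-/

namespace Real

theorem hasDerivAt_tanh (x : ℝ) : HasDerivAt tanh (1 - tanh x ^ 2) x := by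
  have hcosh : cosh x ≠ 0 := (cosh_pos x).ne'
  rw [show tanh = fun y => sinh y / cosh y from funext tanh_eq_sinh_div_cosh]
  refine ((hasDerivAt_sinh x).fun_div (hasDerivAt_cosh x) hcosh).congr_deriv ?_
  field_simp

@[fun_prop]
theorem continuous_tanh : Continuous tanh :=
  continuous_iff_continuousAt.2 fun x => (hasDerivAt_tanh x).continuousAt

theorem monotone_tanh : Monotone tanh := fun x y hxy => by
  have mem : ∀ z, tanh z ∈ Set.Ioo (-1) 1 := fun z => ⟨neg_one_lt_tanh z, tanh_lt_one z⟩
  rwa [← artanh_le_artanh_iff (mem x) (mem y), artanh_tanh, artanh_tanh]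

end Real

open Real

theorem sub_le_integral_sq_deriv_add_riccati_mul_sq {a b : ℝ} (hab : a ≤ b)
    {φ φ' W W' : ℝ → ℝ} (hφ : ∀ x, HasDerivAt φ (φ' x) x) (hφ' : Continuous φ')
    (hW : ∀ x, HasDerivAt W (W' x) x) (hW' : Continuous W') :
    W b * φ b ^ 2 - W a * φ a ^ 2 ≤ ∫ x in a..b, (φ' x ^ 2 + (W' x + W x ^ 2) * φ x ^ 2) := by
  have hφc : Continuous φ := continuous_iff_continuousAt.2 fun x => (hφ x).continuousAt
  have hWc : Continuous W := continuous_iff_continuousAt.2 fun x => (hW x).continuousAt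
  have hderiv : ∀ x, HasDerivAt (fun x => W x * φ x ^ 2)
      (W' x * φ x ^ 2 + W x * (2 * φ x * φ' x)) x := fun x => by
    simpa [mul_comm, mul_assoc] using (hW x).fun_mul ((hφ x).fun_pow 2)
  calc W b * φ b ^ 2 - W a * φ a ^ 2
      = ∫ x in a..b, (W' x * φ x ^ 2 + W x * (2 * φ x * φ' x)) :=
        (integral_eq_sub_of_hasDerivAt (fun x _ => hderiv x)
          (Continuous.intervalIntegrable (by fun_prop) a b)).symm
    _ ≤ ∫ x in a..b, (φ' x ^ 2 + (W' x + W x ^ 2) * φ x ^ 2) :=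
        integral_mono_on hab (Continuous.intervalIntegrable (by fun_prop) a b)
          (Continuous.intervalIntegrable (by fun_prop) a b)
          fun x _ => by nlinarith [sq_nonneg (φ' x - W x * φ x)]

theorem mul_tanh_mul_sq_le_integral (β : ℝ) {d : ℝ} (hd : 0 ≤ d)
    {φ φ' : ℝ → ℝ} (hφ : ∀ x, HasDerivAt φ (φ' x) x) (hφ' : Continuous φ') :
    β * tanh (β * d) * φ 0 ^ 2 ≤
      (∫ x in (0:ℝ)..d, φ' x ^ 2) + β ^ 2 * ∫ x in (0:ℝ)..d, φ x ^ 2 := by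
  have hφc : Continuous φ := continuous_iff_continuousAt.2 fun x => (hφ x).continuousAt
  have hlin : ∀ x, HasDerivAt (fun x => β * (x - d)) β x := fun x => by
    simpa using ((hasDerivAt_id x).sub_const d).const_mul β
  have hW : ∀ x, HasDerivAt (fun x => β * tanh (β * (x - d)))
      (β * ((1 - tanh (β * (x - d)) ^ 2) * β)) x := fun x =>
    ((hasDerivAt_tanh _).comp x (hlin x)).const_mul β
  have hriccati : ∀ x,
      β * ((1 - tanh (β * (x - d)) ^ 2) * β) + (β * tanh (β * (x - d))) ^ 2 = β ^ 2 :=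
    fun x => by ring
  have h := sub_le_integral_sq_deriv_add_riccati_mul_sq hd hφ hφ' hW (by fun_prop)
  simp only [hriccati, sub_self, mul_zero, tanh_zero, zero_sub, mul_neg, tanh_neg] at h
  rw [integral_add (Continuous.intervalIntegrable (by fun_prop) _ _)
    (Continuous.intervalIntegrable (by fun_prop) _ _), intervalIntegral.integral_const_mul] at h
  linarith

theorem exists_forall_ge_le_mul_tanh_mul {α β : ℝ} (hα : 0 < α) (hαβ : α < β) :
    ∃ d₀ > 0, ∀ d ≥ d₀, α ≤ β * tanh (β * d) := by
  have hβ : 0 < β := hα.trans hαβ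
  have hmem : α / β ∈ Set.Ioo 0 1 := ⟨div_pos hα hβ, (div_lt_one hβ).2 hαβ⟩
  refine ⟨artanh (α / β) / β, div_pos (artanh_pos hmem) hβ, fun d hd => ?_⟩
  have hβd : artanh (α / β) ≤ β * d := by rwa [ge_iff_le, div_le_iff₀' hβ] at hd
  have htanh := monotone_tanh hβd
  rwa [tanh_artanh ⟨by linarith [hmem.1], hmem.2⟩, div_le_iff₀' hβ] at htanh

/-- If `√V₀ tanh(√V₀ d) ≥ α` then the Neumann form
`∫_{-d}^d |φ'|² + V₀∫_0^d |φ|² - α|φ(0)|²` is nonnegative for every `φ ∈ H¹(-d,d)`;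
in particular for `V₀ > α²` this holds for all sufficiently large `d`. -/
theorem stmt_8 (α V₀ : ℝ) (hα : 0 < α) (hV₀ : 0 < V₀) :
    (∀ d : ℝ, 0 < d → α ≤ Real.sqrt V₀ * Real.tanh (Real.sqrt V₀ * d) →
      ∀ φ φ' : ℝ → ℝ, (∀ x, HasDerivAt φ (φ' x) x) → Continuous φ' →
        0 ≤ (∫ x in (-d)..d, (φ' x) ^ 2) + V₀ * (∫ x in (0:ℝ)..d, (φ x) ^ 2)
            - α * (φ 0) ^ 2) ∧
    (α ^ 2 < V₀ → ∃ d₀ > (0:ℝ), ∀ d ≥ d₀, α ≤ Real.sqrt V₀ * Real.tanh (Real.sqrt V₀ * d)) := by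
  refine ⟨fun d hd hcrit φ φ' hφ hφ' => ?_,
    fun hαV => exists_forall_ge_le_mul_tanh_mul hα (lt_sqrt_of_sq_lt hαV)⟩
  have hright := mul_tanh_mul_sq_le_integral (√V₀) hd.le hφ hφ'
  have hleft : 0 ≤ ∫ x in (-d)..0, φ' x ^ 2 :=
    integral_nonneg (by linarith) fun _ _ => sq_nonneg _
  rw [sq_sqrt hV₀.le] at hright
  rw [← integral_add_adjacent_intervals (b := 0)
    (Continuous.intervalIntegrable (by fun_prop) _ _)
    (Continuous.intervalIntegrable (by fun_prop) _ _)]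
  nlinarith [mul_le_mul_of_nonneg_right hcrit (sq_nonneg (φ 0))]
end

section
/- Let V₀ > 0 and d > 0. For every φ ∈ H¹(0,d), ∫_0^d (|φ'(x)|² + V₀|φ(x)|²) dx ≥ √V₀ · tanh(√V₀ d) · |φ(0)|², and the constant √V₀ tanh(√V₀ d) is optimal (attained by φ(x) = cosh(√V₀(x−d))). -/
open MeasureTheory intervalIntegral

/-!
Complete the square against a solution `r` of the Riccati equation `r' = r² - V₀`: then
`(φ' + r φ)² = φ'² + V₀ φ² + (r φ²)'`, so integrating over `[0, d]` gives
`∫ (φ'² + V₀ φ²) = r(0) φ(0)² - r(d) φ(d)² + ∫ (φ' + r φ)²`.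
The choice `r(x) = √V₀ tanh(√V₀ (d - x))` has `r(d) = 0` and `r(0) = √V₀ tanh(√V₀ d)`, which gives
the inequality; for `φ(x) = cosh(√V₀ (x - d))` one has `φ' + r φ = 0`, which gives equality.
-/

theorem Real.hasDerivAt_tanh_s9 (x : ℝ) : HasDerivAt Real.tanh (1 - Real.tanh x ^ 2) x := by
  have h := (Real.hasDerivAt_sinh x).div (Real.hasDerivAt_cosh x) (Real.cosh_pos x).ne'
  have htanh : Real.sinh / Real.cosh = Real.tanh := by
    funext y; rw [Pi.div_apply, Real.tanh_eq_sinh_div_cosh]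
  rw [htanh] at h
  refine h.congr_deriv ?_
  rw [Real.tanh_eq_sinh_div_cosh]
  field_simp

theorem hasDerivAt_mul_tanh_mul_sub (s d x : ℝ) :
    HasDerivAt (fun y => s * Real.tanh (s * (d - y)))
      ((s * Real.tanh (s * (d - x))) ^ 2 - s ^ 2) x := by
  have hinner : HasDerivAt (fun y : ℝ => s * (d - y)) (s * (-1)) x :=
    ((hasDerivAt_id x).const_sub d).const_mul s
  refine (((Real.hasDerivAt_tanh_s9 _).comp x hinner).const_mul s).congr_deriv ?_
  ring

theorem integral_deriv_add_mul_sq_of_riccati {V a b : ℝ} {r φ φ' : ℝ → ℝ}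
    (hr : ∀ x, HasDerivAt r (r x ^ 2 - V) x) (hφ : ∀ x, HasDerivAt φ (φ' x) x)
    (hφ' : Continuous φ') :
    ∫ x in a..b, (φ' x + r x * φ x) ^ 2
      = (∫ x in a..b, (φ' x ^ 2 + V * φ x ^ 2)) + (r b * φ b ^ 2 - r a * φ a ^ 2) := by
  have hφc : Continuous φ := continuous_iff_continuousAt.mpr fun x => (hφ x).continuousAt
  have hrc : Continuous r := continuous_iff_continuousAt.mpr fun x => (hr x).continuousAt
  have hderiv : ∀ x, HasDerivAt (fun y => r y * φ y ^ 2)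
      ((r x ^ 2 - V) * φ x ^ 2 + r x * (2 * φ x * φ' x)) x := by
    intro x
    refine ((hr x).mul ((hφ x).pow 2)).congr_deriv ?_
    simp only [Pi.pow_apply, Nat.cast_ofNat]
    ring
  have hftc : ∫ x in a..b, ((r x ^ 2 - V) * φ x ^ 2 + r x * (2 * φ x * φ' x))
      = r b * φ b ^ 2 - r a * φ a ^ 2 :=
    integral_eq_sub_of_hasDerivAt (fun x _ => hderiv x)
      (Continuous.intervalIntegrable (by fun_prop) a b)
  rw [← hftc, ← intervalIntegral.integral_add (Continuous.intervalIntegrable (by fun_prop) a b)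
    (Continuous.intervalIntegrable (by fun_prop) a b)]
  congr 1
  funext x
  ring

theorem le_integral_deriv_sq_add_mul_sq_of_riccati {V a b : ℝ} {r φ φ' : ℝ → ℝ} (hab : a ≤ b)
    (hr : ∀ x, HasDerivAt r (r x ^ 2 - V) x) (hφ : ∀ x, HasDerivAt φ (φ' x) x)
    (hφ' : Continuous φ') :
    r a * φ a ^ 2 - r b * φ b ^ 2 ≤ ∫ x in a..b, (φ' x ^ 2 + V * φ x ^ 2) := by
  have hsq : 0 ≤ ∫ x in a..b, (φ' x + r x * φ x) ^ 2 :=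
    integral_nonneg hab fun x _ => sq_nonneg _
  rw [integral_deriv_add_mul_sq_of_riccati hr hφ hφ'] at hsq
  linarith

/-- Finite-interval trace inequality: for every `φ ∈ H¹(0,d)`,
`∫_0^d (|φ'|² + V₀|φ|²) ≥ √V₀ tanh(√V₀ d)·|φ(0)|²`, and the constant is optimal,
attained by `φ(x) = cosh(√V₀(x-d))`. -/
theorem stmt_9 (V₀ d : ℝ) (hV₀ : 0 < V₀) (hd : 0 < d) :
    (∀ φ φ' : ℝ → ℝ, (∀ x, HasDerivAt φ (φ' x) x) → Continuous φ' →
      Real.sqrt V₀ * Real.tanh (Real.sqrt V₀ * d) * (φ 0) ^ 2 ≤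
        ∫ x in (0:ℝ)..d, ((φ' x) ^ 2 + V₀ * (φ x) ^ 2)) ∧
    (∫ x in (0:ℝ)..d, ((Real.sqrt V₀ * Real.sinh (Real.sqrt V₀ * (x - d))) ^ 2
        + V₀ * (Real.cosh (Real.sqrt V₀ * (x - d))) ^ 2))
      = Real.sqrt V₀ * Real.tanh (Real.sqrt V₀ * d)
        * (Real.cosh (Real.sqrt V₀ * ((0:ℝ) - d))) ^ 2 := by
  set s := Real.sqrt V₀
  have hr : ∀ x, HasDerivAt (fun y => s * Real.tanh (s * (d - y)))
      ((s * Real.tanh (s * (d - x))) ^ 2 - V₀) x := by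
    rw [← Real.sq_sqrt hV₀.le]
    exact hasDerivAt_mul_tanh_mul_sub s d
  constructor
  · intro φ φ' hφ hφ'
    simpa using le_integral_deriv_sq_add_mul_sq_of_riccati hd.le hr hφ hφ'
  · have hcosh (x : ℝ) : HasDerivAt (fun y => Real.cosh (s * (y - d)))
        (s * Real.sinh (s * (x - d))) x := by
      refine ((Real.hasDerivAt_cosh _).comp x
        (((hasDerivAt_id x).sub_const d).const_mul s)).congr_deriv ?_
      simp only [id, mul_one]
      ring
    have hzero (x : ℝ) : s * Real.sinh (s * (x - d))
        + s * Real.tanh (s * (d - x)) * Real.cosh (s * (x - d)) = 0 := by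
      rw [show s * (d - x) = -(s * (x - d)) by ring, Real.tanh_neg, Real.tanh_eq_sinh_div_cosh]
      field_simp
      ring
    have hsum := integral_deriv_add_mul_sq_of_riccati (a := 0) (b := d) hr hcosh (by fun_prop)
    simp only [hzero, ne_eq, OfNat.ofNat_ne_zero, not_false_eq_true, zero_pow,
      intervalIntegral.integral_zero, sub_self, mul_zero, Real.tanh_zero, zero_mul, zero_sub,
      sub_zero] at hsum ⊢
    linarith
end
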